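/- arXiv:2006.05901 — 2 statements merged into one kernel-verified Lean document; each statement's English description precedes it below -/
import Mathlib

section
/- If between two consecutive sender fetch events the sender receives capacity+1 distinctly labeled acknowledgments with alternating index equal to its current index, and at most capacity such packets could have resided in the channel beforehand, then the receiver must have sent at least one acknowledgment with that index during this interval; hence the receiver's LastDeliveredIndex equaled the sender's AltIndex at some configuration in the interval. -/
theorem receiver_sent_ack_general {α : Type*} [DecidableEq α]
    (capacity : ℕ) (A C : Finset α)
    (idx : α → ZMod 3) (sentByReceiver : α → Prop) (ldi : α → ZMod 3) (s : ZMod 3)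
    (hA : A.card = capacity + 1)
    (hC : C.card ≤ capacity)
    (hidx : ∀ p ∈ A, idx p = s)
    (hsent : ∀ p ∈ A \ C, sentByReceiver p ∧ ldi p = idx p) :
    ∃ p ∈ A, sentByReceiver p ∧ ldi p = s := by
  obtain ⟨p, hpA, hpC⟩ := Finset.exists_mem_notMem_of_card_lt_card (s := C) (t := A) (by omega)
  obtain ⟨hpSent, hpLdi⟩ := hsent p (Finset.mem_sdiff.mpr ⟨hpA, hpC⟩)
  exact ⟨p, hpA, hpSent, hpLdi.trans (hidx p hpA)⟩

/-- If the sender receives `capacity+1` distinctly labeled acknowledgments, all with index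
`s`, at most `capacity` of which could have resided in the channel beforehand, and every
non-channel-resident one was sent by the receiver with index equal to its
`LastDeliveredIndex` at sending time, then some acknowledgment was sent by the receiver
when its `LastDeliveredIndex` equaled `s`. -/
theorem receiver_sent_ack {α : Type*} [DecidableEq α]
    (capacity : ℕ) (A C : Finset α)
    (idx : α → ZMod 3) (sentByReceiver : α → Prop) (ldi : α → ZMod 3) (s : ZMod 3)
    (hA : A.card = capacity + 1)
    (hCA : C ⊆ A) (hC : C.card ≤ capacity)
    (hidx : ∀ p ∈ A, idx p = s)
    (hsent : ∀ p ∈ A \ C, sentByReceiver p ∧ ldi p = idx p) :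
    ∃ p ∈ A, sentByReceiver p ∧ ldi p = s :=
  receiver_sent_ack_general capacity A C idx sentByReceiver ldi s hA hC hidx hsent
end

section
/- In a legal execution modeled by interleaved sender-fetch and receiver-deliver events, if between consecutive sender fetches there is at least one receiver delivery and vice versa, then the fetch and delivery events strictly alternate eventually: between the α-th and (α+1)-th fetch there is exactly one delivery, for all sufficiently large α. -/
/-!
Only uniqueness needs an argument. Once the fetch interval `(f α, f (α + 1))` lies beyond `d 2`, two deliveries in it would
enclose a whole delivery interval and hence a fetch, which would then sit strictly between
two consecutive fetches.
-/

namespace StrictMono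

variable {X : Type*} [Preorder X] {f d : ℕ → X}

theorem apply_notMem_Ioo_apply_succ (hf : StrictMono f) (a b : ℕ) :
    f b ∉ Set.Ioo (f a) (f (a + 1)) := by
  rintro ⟨h₁, h₂⟩
  have := hf.lt_iff_lt.mp h₁
  have := hf.lt_iff_lt.mp h₂
  omega

theorem exists_apply_mem_Ioo_of_lt (hd : StrictMono d) {n : ℕ}
    (hdf : ∀ β, n ≤ β → ∃ γ, d β < f γ ∧ f γ < d (β + 1)) {β₁ β₂ : ℕ}
    (hn : n ≤ β₁) (hlt : β₁ < β₂) : ∃ γ, f γ ∈ Set.Ioo (d β₁) (d β₂) := by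
  obtain ⟨γ, hγ₁, hγ₂⟩ := hdf β₁ hn
  exact ⟨γ, hγ₁, hγ₂.trans_le (hd.monotone hlt)⟩

theorem eq_of_apply_mem_Ioo_apply_succ (hf : StrictMono f) (hd : StrictMono d) {n : ℕ}
    (hdf : ∀ β, n ≤ β → ∃ γ, d β < f γ ∧ f γ < d (β + 1)) {a : ℕ} (ha : d n ≤ f a)
    {β₁ β₂ : ℕ} (h₁ : d β₁ ∈ Set.Ioo (f a) (f (a + 1)))
    (h₂ : d β₂ ∈ Set.Ioo (f a) (f (a + 1))) : β₁ = β₂ := by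
  have not_before : ∀ {β β'}, d β ∈ Set.Ioo (f a) (f (a + 1)) →
      d β' ∈ Set.Ioo (f a) (f (a + 1)) → ¬ β < β' := by
    intro β β' hβ hβ' hlt
    have hn : n ≤ β := hd.le_iff_le.mp (ha.trans hβ.1.le)
    obtain ⟨γ, hγ₁, hγ₂⟩ := hd.exists_apply_mem_Ioo_of_lt hdf hn hlt
    exact hf.apply_notMem_Ioo_apply_succ a γ ⟨hβ.1.trans hγ₁, hγ₂.trans hβ'.2⟩
  exact le_antisymm (not_lt.mp (not_before h₂ h₁)) (not_lt.mp (not_before h₁ h₂))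

end StrictMono

/-- If between consecutive sender fetches there is at least one receiver delivery and
between consecutive receiver deliveries there is at least one sender fetch (from index 2
onwards), then eventually fetches and deliveries strictly alternate: for all sufficiently
large `α` there is exactly one delivery between the `α`-th and `(α+1)`-th fetch. -/
theorem eventual_strict_alternation
    (f d : ℕ → ℕ) (hf : StrictMono f) (hd : StrictMono d)
    (hfd : ∀ α : ℕ, 2 ≤ α → ∃ β : ℕ, f α < d β ∧ d β < f (α + 1))
    (hdf : ∀ β : ℕ, 2 ≤ β → ∃ α : ℕ, d β < f α ∧ f α < d (β + 1)) :
    ∃ N : ℕ, ∀ α : ℕ, N ≤ α → ∃! β : ℕ, f α < d β ∧ d β < f (α + 1) := by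
  refine ⟨max 2 (d 2), fun α hα => ?_⟩
  have hd₂ : d 2 ≤ f α := (le_of_max_le_right hα).trans hf.le_apply
  obtain ⟨β, hβ⟩ := hfd α (le_of_max_le_left hα)
  exact ⟨β, hβ, fun β' hβ' => hf.eq_of_apply_mem_Ioo_apply_succ hd hdf hd₂ hβ' hβ⟩
end
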